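/- Assume there exist a measurable set C ⊆ X, functions W : X → (0,∞) and a non-decreasing r : ℕ → (0,∞) such that: P_θW ≤ W on the complement of C for every θ ∈ Θ; sup_{(x,θ)∈C×Θ} P_θW(x) < ∞; sup_{l≥0} sup_{(x,θ)∈C×Θ} E^{(l)}_{x,θ}[r(τ_C)] < ∞; and Σ_k 1/r(k) < ∞. Then for any probability distributions ξ1 on X and ξ2 on Θ, the sequence {W(X_n) : n ≥ 0} is bounded in probability under P_{ξ1,ξ2}; that is, for every ε > 0 there exist M and N such that P_{ξ1,ξ2}(W(X_n) ≥ M') ≤ ε for all M' ≥ M and n ≥ N. -/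

import Mathlib

/-!
Split the event `W(X_n) ≥ M'` according to the last visit of the chain to `C` before time `n`.
Outside `C` the drift condition makes `W(X_k)`, stopped at the first return to `C`, a
supermartingale; by Markov's inequality the paths that do not return have probability at most
`ξ1 {W ≥ K} + max K (sup_C P_θ W) / M'`. If the last visit is at time `j`, the Markov property
reduces the rest of the path to an excursion from `C` of length `n - j`, of probability at most
`min (sup_C P_θ W / M') (sup E[r(τ_C)] / r(n - j))`: the first bound by the same supermartingale,
the second because `τ_C ≥ n - j` on it. The first bound handles the finitely many short
excursions and the summability of `1 / r` the long ones, uniformly in `n`.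
-/

open MeasureTheory ProbabilityTheory Filter Set
open scoped ENNReal NNReal Classical

noncomputable section

namespace AdaptiveMCMC

variable {X Θ : Type*} [MeasurableSpace X] [MeasurableSpace Θ]

/-- The `W`-weighted norm distance between two measures:
`‖μ − ν‖_W = sup { |μ(g) − ν(g)| : g measurable, |g| ≤ W }`. -/
def wDist (W : X → ℝ) (μ ν : Measure X) : ℝ :=
  ⨆ g : {g : X → ℝ // Measurable g ∧ ∀ x, |g x| ≤ W x},
    |(∫ x, g.1 x ∂μ) - ∫ x, g.1 x ∂ν|

/-- Total variation distance `‖μ − ν‖_TV = sup { |μ(f) − ν(f)| : |f| ≤ 1 }`. -/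
def tvDist (μ ν : Measure X) : ℝ := wDist (fun _ => 1) μ ν

/-- `D(θ,θ') = sup_x ‖P_θ(x,·) − P_θ'(x,·)‖_TV`. -/
def Dtv (P : Θ → Kernel X X) (θ θ' : Θ) : ℝ := ⨆ x : X, tvDist (P θ x) (P θ' x)

/-- Iterates `P^n` of a kernel. -/
def kpow (P : Kernel X X) : ℕ → Kernel X X
  | 0 => Kernel.id
  | n + 1 => (kpow P n) ∘ₖ P

/-- Prepend a state to a path. -/
def prepend {α : Type*} (z : α) (ω : ℕ → α) : ℕ → α
  | 0 => z
  | n + 1 => ω n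

/-- `law l (x,θ)` is the law `P^{(l)}_{x,θ}` of the canonical nonhomogeneous Markov chain
`{Z_n = (X_n, θ_n)}` started at `(x,θ)` whose `n`-th transition kernel is `P̄(l+n)`. -/
structure IsAdaptiveLaw (Pbar : ℕ → Kernel (X × Θ) (X × Θ))
    (law : ℕ → X × Θ → Measure (ℕ → X × Θ)) : Prop where
  prob : ∀ l z, IsProbabilityMeasure (law l z)
  meas : ∀ l, Measurable (law l)
  step : ∀ l z, law l z = (Pbar l z).bind fun z' => (law (l + 1) z').map (prepend z)

/-- The marginal compatibility `∫_{A×Θ} P̄(n;(x,θ);(dx',dθ')) = P_θ(x,A)`. -/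
def Compat (P : Θ → Kernel X X) (Pbar : ℕ → Kernel (X × Θ) (X × Θ)) : Prop :=
  ∀ (n : ℕ) (x : X) (θ : Θ) (A : Set X), MeasurableSet A →
    Pbar n (x, θ) (A ×ˢ (Set.univ : Set Θ)) = P θ x A

/-- Law of the chain with initial distribution `ξ1 ⊗ ξ2` (and `l = 0`). -/
def chainLaw (law : ℕ → X × Θ → Measure (ℕ → X × Θ)) (ξ1 : Measure X) (ξ2 : Measure Θ) :
    Measure (ℕ → X × Θ) :=
  (ξ1.prod ξ2).bind (law 0)

/-- Return time `τ_C = inf {n ≥ 1 : X_n ∈ C}` (equal to `⊤` if no such `n`). -/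
def hitTime (C : Set X) (ω : ℕ → X × Θ) : ℕ∞ :=
  ⨅ m : {m : ℕ // 1 ≤ m ∧ (ω m).1 ∈ C}, (m.1 : ℕ∞)

/-- Evaluation of `r : ℕ → ℝ` at an extended natural, with value `∞` at `∞`. -/
def rEval (r : ℕ → ℝ) : ℕ∞ → ℝ≥0∞ := fun t =>
  if t = ⊤ then ⊤ else ENNReal.ofReal (r t.toNat)

end AdaptiveMCMC

namespace AdaptiveMCMC

open Topology

section Estimates

lemma le_div_ofReal_iff_mul_le {a c : ℝ≥0∞} {b : ℝ} (hb : 0 < b) :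
    a ≤ c / ENNReal.ofReal b ↔ ENNReal.ofReal b * a ≤ c := by
  rw [ENNReal.le_div_iff_mul_le (.inl (ENNReal.ofReal_pos.2 hb).ne') (.inl ENNReal.ofReal_ne_top),
    mul_comm]

lemma tendsto_measure_setOf_le_atTop {α : Type*} [MeasurableSpace α] (μ : Measure α)
    [IsFiniteMeasure μ] {f : α → ℝ} (hf : Measurable f) :
    Tendsto (fun K : ℝ => μ {x | K ≤ f x}) atTop (𝓝 0) := by
  have hempty : ⋂ K : ℝ, {x | K ≤ f x} = ∅ :=
    eq_empty_of_forall_notMem fun x hx => (lt_add_one (f x)).not_ge (mem_iInter.1 hx (f x + 1))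
  simpa [hempty, Function.comp_def] using
    tendsto_measure_iInter_atTop (μ := μ) (s := fun K : ℝ => {x | K ≤ f x})
    (fun K => (measurableSet_le measurable_const hf).nullMeasurableSet)
    (fun a b hab x hx => hab.trans hx) ⟨0, measure_ne_top _ _⟩

lemma exists_sum_range_min_le {f : ℕ → ℝ≥0∞} (hf : ∑' k, f k ≠ ∞) {δ : ℝ≥0∞} (hδ : 0 < δ) :
    ∃ m : ℕ, ∀ (a : ℝ≥0∞) (t : ℕ), ∑ s ∈ Finset.range t, min a (f s) ≤ m * a + δ := by
  obtain ⟨m, hm⟩ := ((ENNReal.tendsto_sum_nat_add f hf).eventually (gt_mem_nhds hδ)).exists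
  refine ⟨m, fun a t => ?_⟩
  calc ∑ s ∈ Finset.range t, min a (f s) ≤ ∑ s ∈ Finset.range (m + t), min a (f s) :=
        Finset.sum_le_sum_of_subset (Finset.range_subset_range.2 (by omega))
    _ = ∑ s ∈ Finset.range m, min a (f s) + ∑ k ∈ Finset.range t, min a (f (m + k)) :=
        Finset.sum_range_add _ _ _
    _ ≤ ∑ _ ∈ Finset.range m, a + ∑ k ∈ Finset.range t, f (k + m) := by
        gcongr with s _ k _
        · exact min_le_left _ _
        · rw [add_comm]; exact min_le_right _ _
    _ ≤ m * a + δ := by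
        rw [Finset.sum_const, Finset.card_range, nsmul_eq_mul]
        exact add_le_add le_rfl ((ENNReal.sum_le_tsum _).trans hm.le)

lemma tsum_div_ofReal_ne_top {r : ℕ → ℝ} (hrpos : ∀ n, 0 < r n)
    (hr : Summable fun k => 1 / r k) {E : ℝ≥0∞} (hE : E ≠ ∞) :
    ∑' k, E / ENNReal.ofReal (r k) ≠ ∞ := by
  have h : ∀ k, E / ENNReal.ofReal (r k) = ENNReal.ofReal (1 / r k) * E := fun k => by
    rw [ENNReal.div_eq_inv_mul, one_div, ENNReal.ofReal_inv_of_pos (hrpos k)]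
  simp_rw [h]
  rw [ENNReal.tsum_mul_right,
    ← ENNReal.ofReal_tsum_of_nonneg (fun k => (one_div_pos.2 (hrpos k)).le) hr]
  exact ENNReal.mul_ne_top ENNReal.ofReal_ne_top hE

end Estimates

section Paths

variable {α : Type*}

def shift (j : ℕ) (ω : ℕ → α) : ℕ → α := fun n => ω (n + j)

variable [MeasurableSpace α]

lemma measurable_prepend (z : α) : Measurable (prepend z : (ℕ → α) → ℕ → α) := by
  refine measurable_pi_lambda _ fun n => ?_
  cases n with
  | zero => exact measurable_const
  | succ n => exact measurable_pi_apply n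

lemma measurable_shift (j : ℕ) : Measurable (shift j : (ℕ → α) → ℕ → α) :=
  measurable_pi_lambda _ fun n => measurable_pi_apply (n + j)

end Paths

section Avoidance

variable {X Θ : Type*} {C : Set X}

def avoidsUpTo (C : Set X) (t : ℕ) : Set (ℕ → X × Θ) := {ω | ∀ k ∈ Icc 1 t, (ω k).1 ∉ C}

lemma mem_avoidsUpTo_of_prepend_mem {z : X × Θ} {ω : ℕ → X × Θ} {t : ℕ}
    (h : prepend z ω ∈ avoidsUpTo C (t + 1)) : (ω 0).1 ∉ C ∧ ω ∈ avoidsUpTo C t :=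
  ⟨h 1 ⟨le_rfl, by omega⟩, fun k hk => h (k + 1) ⟨by omega, by simpa using hk.2⟩⟩

lemma le_hitTime_of_mem_avoidsUpTo {ω : ℕ → X × Θ} {t : ℕ} (h : ω ∈ avoidsUpTo C t) :
    ((t + 1 : ℕ) : ℕ∞) ≤ hitTime C ω :=
  le_iInf fun ⟨m, hm1, hmC⟩ => by
    by_contra hlt
    exact h m ⟨hm1, by exact_mod_cast Nat.lt_succ_iff.1 (by exact_mod_cast not_le.1 hlt)⟩ hmC

/-- Last-exit decomposition: `t - s` is the last visit to `C` among the times `1, …, t`. -/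
lemma mem_avoidsUpTo_or_exists_last_visit (ω : ℕ → X × Θ) (t : ℕ) :
    ω ∈ avoidsUpTo C t ∨
      ∃ s < t, (ω (t - s)).1 ∈ C ∧ shift (t - s) ω ∈ avoidsUpTo C s := by
  by_cases hav : ω ∈ avoidsUpTo C t
  · exact .inl hav
  right
  simp only [avoidsUpTo, mem_ofPred_eq, not_forall, not_not, exists_prop] at hav
  obtain ⟨k, ⟨hk1, hkt⟩, hkC⟩ := hav
  let visit : ℕ → Prop := fun i => 1 ≤ i ∧ (ω i).1 ∈ C
  obtain ⟨j, hj, hjt, hlast⟩ : ∃ j, visit j ∧ j ≤ t ∧ ∀ i, j < i → i ≤ t → ¬ visit i :=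
    ⟨_, Nat.findGreatest_spec hkt ⟨hk1, hkC⟩, Nat.findGreatest_le t,
      fun _ => Nat.findGreatest_is_greatest⟩
  refine ⟨t - j, by omega, ?_, ?_⟩ <;> rw [Nat.sub_sub_self hjt]
  · exact hj.2
  · intro i hi hiC
    simp only [mem_Icc] at hi
    exact hlast (i + j) (by omega) (by omega) ⟨by omega, hiC⟩

@[simp]
lemma rEval_natCast (r : ℕ → ℝ) (n : ℕ) : rEval r n = ENNReal.ofReal (r n) := by
  simp [rEval]

lemma rEval_mono {r : ℕ → ℝ} (hr : Monotone r) : Monotone (rEval r) := by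
  intro a b hab
  rcases eq_or_ne b ⊤ with rfl | hb
  · simp [rEval]
  have ha : a ≠ ⊤ := ne_top_of_le_ne_top hb hab
  simp only [rEval, if_neg ha, if_neg hb]
  exact ENNReal.ofReal_le_ofReal (hr ((ENat.toNat_le_toNat hab hb)))

variable [MeasurableSpace X] [MeasurableSpace Θ]

lemma measurableSet_avoidsUpTo (hC : MeasurableSet C) (t : ℕ) :
    MeasurableSet (avoidsUpTo (Θ := Θ) C t) := by
  simp only [avoidsUpTo, ofPred_forall]
  exact .iInter fun k => .iInter fun _ => (measurable_pi_apply k).fst hC.compl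

lemma mul_measure_avoidsUpTo_le_lintegral_rEval {r : ℕ → ℝ} (hr : Monotone r)
    (hC : MeasurableSet C) (μ : Measure (ℕ → X × Θ)) (t : ℕ) :
    ENNReal.ofReal (r (t + 1)) * μ (avoidsUpTo C t) ≤ ∫⁻ ω, rEval r (hitTime C ω) ∂μ := by
  rw [← lintegral_indicator_const (measurableSet_avoidsUpTo hC t)]
  refine lintegral_mono (indicator_le fun ω hω => ?_)
  have h := rEval_mono hr (le_hitTime_of_mem_avoidsUpTo hω)
  rwa [rEval_natCast] at h

end Avoidance

section AdaptiveLaw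

variable {X Θ : Type*} [MeasurableSpace X] [MeasurableSpace Θ]
  {P : Θ → Kernel X X} {Pbar : ℕ → Kernel (X × Θ) (X × Θ)}
  {law : ℕ → X × Θ → Measure (ℕ → X × Θ)}

lemma Compat.lintegral_comp_fst (hcompat : Compat P Pbar) {g : X → ℝ≥0∞} (hg : Measurable g)
    (n : ℕ) (z : X × Θ) : ∫⁻ z', g z'.1 ∂Pbar n z = ∫⁻ y, g y ∂P z.2 z.1 := by
  have hmap : (Pbar n z).map Prod.fst = P z.2 z.1 := by
    ext A hA
    rw [Measure.map_apply measurable_fst hA, ← prod_univ, hcompat n z.1 z.2 A hA]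
  rw [← hmap, lintegral_map hg measurable_fst]

namespace IsAdaptiveLaw

lemma measurable_map_prepend (hlaw : IsAdaptiveLaw Pbar law) (l : ℕ) (z : X × Θ) :
    Measurable fun z' => (law (l + 1) z').map (prepend z) :=
  (Measure.measurable_map _ (measurable_prepend z)).comp (hlaw.meas (l + 1))

lemma apply_eq_lintegral (hlaw : IsAdaptiveLaw Pbar law) {A : Set (ℕ → X × Θ)}
    (hA : MeasurableSet A) (l : ℕ) (z : X × Θ) :
    law l z A = ∫⁻ z', law (l + 1) z' (prepend z ⁻¹' A) ∂Pbar l z := by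
  rw [hlaw.step l z, Measure.bind_apply hA (hlaw.measurable_map_prepend l z).aemeasurable]
  simp_rw [Measure.map_apply (measurable_prepend z) hA]

lemma lintegral_eq_lintegral_prepend (hlaw : IsAdaptiveLaw Pbar law)
    {f : (ℕ → X × Θ) → ℝ≥0∞} (hf : Measurable f) (l : ℕ) (z : X × Θ) :
    ∫⁻ ω, f ω ∂law l z = ∫⁻ z', ∫⁻ ω, f (prepend z ω) ∂law (l + 1) z' ∂Pbar l z := by
  rw [hlaw.step l z,
    Measure.lintegral_bind (hlaw.measurable_map_prepend l z).aemeasurable hf.aemeasurable]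
  simp_rw [lintegral_map hf (measurable_prepend z)]

lemma ae_eval_zero_mem (hlaw : IsAdaptiveLaw Pbar law) {S : Set (X × Θ)} (hS : MeasurableSet S)
    {l : ℕ} {z : X × Θ} (hz : z ∈ S) : ∀ᵐ ω ∂law l z, ω 0 ∈ S := by
  rw [ae_iff,
    hlaw.apply_eq_lintegral (A := {ω | ω 0 ∉ S}) (hS.compl.preimage (measurable_pi_apply 0))]
  have hempty : prepend z ⁻¹' {ω : ℕ → X × Θ | ω 0 ∉ S} = ∅ :=
    eq_empty_of_forall_notMem fun _ h => h hz
  simp [hempty]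

lemma apply_shift_preimage_le (hlaw : IsAdaptiveLaw Pbar law)
    (hPbar : ∀ n, IsMarkovKernel (Pbar n)) {A : Set (ℕ → X × Θ)} (hA : MeasurableSet A)
    {c : ℝ≥0∞} (j l : ℕ) (h : ∀ z', law (l + j) z' A ≤ c) (z : X × Θ) :
    law l z (shift j ⁻¹' A) ≤ c := by
  induction j generalizing l z with
  | zero => exact h z
  | succ j ih =>
    rw [hlaw.apply_eq_lintegral (measurable_shift (j + 1) hA)]
    calc ∫⁻ z', law (l + 1) z' (shift j ⁻¹' A) ∂Pbar l z
        ≤ ∫⁻ _, c ∂Pbar l z :=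
          lintegral_mono fun z' => ih (l + 1) (by simpa [add_right_comm, add_assoc] using h) z'
      _ = c := by simp

lemma lintegral_le_of_lintegral_prepend_le (hlaw : IsAdaptiveLaw Pbar law)
    (hcompat : Compat P Pbar) {f : (ℕ → X × Θ) → ℝ≥0∞} (hf : Measurable f) {g : X → ℝ≥0∞}
    (hg : Measurable g) {l : ℕ} {z : X × Θ}
    (h : ∀ z', ∫⁻ ω, f (prepend z ω) ∂law (l + 1) z' ≤ g z'.1) :
    ∫⁻ ω, f ω ∂law l z ≤ ∫⁻ y, g y ∂P z.2 z.1 := by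
  rw [hlaw.lintegral_eq_lintegral_prepend hf, ← hcompat.lintegral_comp_fst hg]
  exact lintegral_mono h

lemma lintegral_avoidsUpTo_le (hlaw : IsAdaptiveLaw Pbar law) (hcompat : Compat P Pbar)
    {C : Set X} (hC : MeasurableSet C) {W : X → ℝ} (hW : Measurable W)
    (hdrift : ∀ θ, ∀ x ∉ C, ∫⁻ y, ENNReal.ofReal (W y) ∂P θ x ≤ ENNReal.ofReal (W x))
    (t l : ℕ) (z : X × Θ) :
    ∫⁻ ω, (avoidsUpTo C t).indicator (fun ω => ENNReal.ofReal (W (ω (t + 1)).1)) ω ∂law l z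
      ≤ ∫⁻ y, ENNReal.ofReal (W y) ∂P z.2 z.1 := by
  have hWω : ∀ n, Measurable fun ω : ℕ → X × Θ => ENNReal.ofReal (W (ω n).1) :=
    fun n => (hW.comp (measurable_pi_apply n).fst).ennreal_ofReal
  induction t generalizing l z with
  | zero =>
    refine hlaw.lintegral_le_of_lintegral_prepend_le hcompat
      ((hWω _).indicator (measurableSet_avoidsUpTo hC _)) hW.ennreal_ofReal fun z' => ?_
    have := hlaw.prob (l + 1) z'
    have hle : ∀ᵐ ω ∂law (l + 1) z', W (ω 0).1 ≤ W z'.1 :=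
      hlaw.ae_eval_zero_mem (S := {p | W p.1 ≤ W z'.1})
        (measurableSet_le (hW.comp measurable_fst) measurable_const)
        (show W z'.1 ≤ W z'.1 from le_rfl)
    calc _ ≤ ∫⁻ ω, ENNReal.ofReal (W (ω 0).1) ∂law (l + 1) z' :=
          lintegral_mono fun ω => indicator_le_self (avoidsUpTo C 0)
            (fun ω => ENNReal.ofReal (W (ω 1).1)) (prepend z ω)
      _ ≤ ∫⁻ _, ENNReal.ofReal (W z'.1) ∂law (l + 1) z' :=
          lintegral_mono_ae (hle.mono fun ω hω => ENNReal.ofReal_le_ofReal hω)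
      _ = ENNReal.ofReal (W z'.1) := by simp
  | succ t ih =>
    refine hlaw.lintegral_le_of_lintegral_prepend_le hcompat
      ((hWω _).indicator (measurableSet_avoidsUpTo hC _)) hW.ennreal_ofReal fun z' => ?_
    by_cases hz' : z'.1 ∈ C
    · have hzero : ∀ᵐ ω ∂law (l + 1) z', (avoidsUpTo C (t + 1)).indicator
          (fun ω => ENNReal.ofReal (W (ω (t + 1 + 1)).1)) (prepend z ω) = 0 :=
        (hlaw.ae_eval_zero_mem (measurable_fst hC) hz').mono fun ω hω =>
          indicator_of_notMem (fun h => (mem_avoidsUpTo_of_prepend_mem h).1 hω) _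
      simp [lintegral_congr_ae hzero]
    calc _ ≤ ∫⁻ ω, (avoidsUpTo C t).indicator (fun ω => ENNReal.ofReal (W (ω (t + 1)).1)) ω
            ∂law (l + 1) z' :=
          lintegral_mono fun ω => indicator_apply_le' (fun h => by
            rw [indicator_of_mem (mem_avoidsUpTo_of_prepend_mem h).2]; rfl) fun _ => zero_le
      _ ≤ ∫⁻ y, ENNReal.ofReal (W y) ∂P z'.2 z'.1 := ih (l + 1) z'
      _ ≤ ENNReal.ofReal (W z'.1) := hdrift _ _ hz'

lemma mul_measure_avoidsUpTo_le (hlaw : IsAdaptiveLaw Pbar law) (hcompat : Compat P Pbar)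
    {C : Set X} (hC : MeasurableSet C) {W : X → ℝ} (hW : Measurable W)
    (hdrift : ∀ θ, ∀ x ∉ C, ∫⁻ y, ENNReal.ofReal (W y) ∂P θ x ≤ ENNReal.ofReal (W x))
    (M' : ℝ) (t l : ℕ) (z : X × Θ) :
    ENNReal.ofReal M' * law l z (avoidsUpTo C t ∩ {ω | M' ≤ W (ω (t + 1)).1})
      ≤ ∫⁻ y, ENNReal.ofReal (W y) ∂P z.2 z.1 := by
  have hmeas : MeasurableSet (avoidsUpTo C t ∩ {ω : ℕ → X × Θ | M' ≤ W (ω (t + 1)).1}) :=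
    (measurableSet_avoidsUpTo hC t).inter
      (measurableSet_le measurable_const (hW.comp (measurable_pi_apply _).fst))
  refine le_trans ?_ (hlaw.lintegral_avoidsUpTo_le hcompat hC hW hdrift t l z)
  rw [← lintegral_indicator_const hmeas]
  refine lintegral_mono (indicator_le fun ω hω => ?_)
  rw [indicator_of_mem hω.1]
  exact ENNReal.ofReal_le_ofReal hω.2

lemma measure_excursion_le (hlaw : IsAdaptiveLaw Pbar law) (hcompat : Compat P Pbar)
    {C : Set X} (hC : MeasurableSet C) {W : X → ℝ} (hW : Measurable W)
    (hdrift : ∀ θ, ∀ x ∉ C, ∫⁻ y, ENNReal.ofReal (W y) ∂P θ x ≤ ENNReal.ofReal (W x))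
    {Mb : ℝ} (hMb : ∀ θ, ∀ x ∈ C, ∫⁻ y, ENNReal.ofReal (W y) ∂P θ x ≤ ENNReal.ofReal Mb)
    {r : ℕ → ℝ} (hrpos : ∀ n, 0 < r n) (hrmono : Monotone r) {E : ℝ≥0∞}
    (hE : ∀ l z, z.1 ∈ C → ∫⁻ ω, rEval r (hitTime C ω) ∂law l z ≤ E)
    {M' : ℝ} (hM' : 0 < M') (s l : ℕ) (z : X × Θ) :
    law l z ({ω | (ω 0).1 ∈ C} ∩ avoidsUpTo C s ∩ {ω | M' ≤ W (ω (s + 1)).1})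
      ≤ min (ENNReal.ofReal Mb / ENNReal.ofReal M') (E / ENNReal.ofReal (r (s + 1))) := by
  by_cases hz : z.1 ∈ C
  · refine le_min ?_ ?_
    · rw [le_div_ofReal_iff_mul_le hM']
      calc _ ≤ ENNReal.ofReal M' * law l z (avoidsUpTo C s ∩ {ω | M' ≤ W (ω (s + 1)).1}) :=
            mul_le_mul_right (measure_mono (inter_subset_inter_left _ inter_subset_right)) _
        _ ≤ ∫⁻ y, ENNReal.ofReal (W y) ∂P z.2 z.1 :=
            hlaw.mul_measure_avoidsUpTo_le hcompat hC hW hdrift M' s l z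
        _ ≤ ENNReal.ofReal Mb := hMb _ _ hz
    · rw [le_div_ofReal_iff_mul_le (hrpos _)]
      calc _ ≤ ENNReal.ofReal (r (s + 1)) * law l z (avoidsUpTo C s) :=
            mul_le_mul_right (measure_mono fun ω hω => hω.1.2) _
        _ ≤ ∫⁻ ω, rEval r (hitTime C ω) ∂law l z :=
            mul_measure_avoidsUpTo_le_lintegral_rEval hrmono hC _ s
        _ ≤ E := hE l z hz
  · have hout : ∀ᵐ ω ∂law l z, (ω 0).1 ∉ C := hlaw.ae_eval_zero_mem (measurable_fst hC.compl) hz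
    exact (measure_mono_null (fun ω hω => not_not.2 hω.1.1) (ae_iff.1 hout)).trans_le zero_le

lemma chainLaw_apply (hlaw : IsAdaptiveLaw Pbar law) (ξ1 : Measure X) (ξ2 : Measure Θ)
    {A : Set (ℕ → X × Θ)} (hA : MeasurableSet A) :
    chainLaw law ξ1 ξ2 A = ∫⁻ z, law 0 z A ∂ξ1.prod ξ2 :=
  Measure.bind_apply hA (hlaw.meas 0).aemeasurable

lemma chainLaw_avoidsUpTo_le (hlaw : IsAdaptiveLaw Pbar law) (hcompat : Compat P Pbar)
    {C : Set X} (hC : MeasurableSet C) {W : X → ℝ} (hW : Measurable W)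
    (hdrift : ∀ θ, ∀ x ∉ C, ∫⁻ y, ENNReal.ofReal (W y) ∂P θ x ≤ ENNReal.ofReal (W x))
    {Mb : ℝ} (hMb : ∀ θ, ∀ x ∈ C, ∫⁻ y, ENNReal.ofReal (W y) ∂P θ x ≤ ENNReal.ofReal Mb)
    (ξ1 : Measure X) (ξ2 : Measure Θ) [IsProbabilityMeasure ξ1] [IsProbabilityMeasure ξ2]
    (K : ℝ) {M' : ℝ} (hM' : 0 < M') (t : ℕ) :
    chainLaw law ξ1 ξ2 (avoidsUpTo C t ∩ {ω | M' ≤ W (ω (t + 1)).1})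
      ≤ ξ1 {x | K ≤ W x} + ENNReal.ofReal (max K Mb) / ENNReal.ofReal M' := by
  have hmeas : MeasurableSet (avoidsUpTo C t ∩ {ω : ℕ → X × Θ | M' ≤ W (ω (t + 1)).1}) :=
    (measurableSet_avoidsUpTo hC t).inter
      (measurableSet_le measurable_const (hW.comp (measurable_pi_apply _).fst))
  have hK : MeasurableSet {z : X × Θ | K ≤ W z.1} :=
    measurableSet_le measurable_const (hW.comp measurable_fst)
  have hpoint : ∀ z : X × Θ, law 0 z (avoidsUpTo C t ∩ {ω | M' ≤ W (ω (t + 1)).1})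
      ≤ {z : X × Θ | K ≤ W z.1}.indicator 1 z + ENNReal.ofReal (max K Mb) / ENNReal.ofReal M' := by
    intro z
    by_cases hKz : K ≤ W z.1
    · have := hlaw.prob 0 z
      simp [hKz, prob_le_one.trans le_self_add]
    rw [indicator_of_notMem (show z ∉ {z : X × Θ | K ≤ W z.1} from hKz), zero_add,
      le_div_ofReal_iff_mul_le hM']
    refine (hlaw.mul_measure_avoidsUpTo_le hcompat hC hW hdrift M' t 0 z).trans ?_
    by_cases hzC : z.1 ∈ C
    · exact (hMb _ _ hzC).trans (ENNReal.ofReal_le_ofReal (le_max_right _ _))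
    · exact (hdrift _ _ hzC).trans
        (ENNReal.ofReal_le_ofReal ((not_le.1 hKz).le.trans (le_max_left _ _)))
  calc _ ≤ ∫⁻ z, {z : X × Θ | K ≤ W z.1}.indicator 1 z
          + ENNReal.ofReal (max K Mb) / ENNReal.ofReal M' ∂ξ1.prod ξ2 := by
        rw [chainLaw_apply hlaw ξ1 ξ2 hmeas]; exact lintegral_mono hpoint
    _ = ξ1 {x | K ≤ W x} + ENNReal.ofReal (max K Mb) / ENNReal.ofReal M' := by
        rw [lintegral_add_right _ measurable_const, lintegral_indicator_one hK, lintegral_const,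
          measure_univ, mul_one, show {z : X × Θ | K ≤ W z.1} = {x | K ≤ W x} ×ˢ univ by ext; simp,
          Measure.prod_prod, measure_univ, mul_one]

lemma chainLaw_exceeds_le (hlaw : IsAdaptiveLaw Pbar law) (hPbar : ∀ n, IsMarkovKernel (Pbar n))
    (hcompat : Compat P Pbar) {C : Set X} (hC : MeasurableSet C) {W : X → ℝ} (hW : Measurable W)
    (hdrift : ∀ θ, ∀ x ∉ C, ∫⁻ y, ENNReal.ofReal (W y) ∂P θ x ≤ ENNReal.ofReal (W x))
    {Mb : ℝ} (hMb : ∀ θ, ∀ x ∈ C, ∫⁻ y, ENNReal.ofReal (W y) ∂P θ x ≤ ENNReal.ofReal Mb)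
    {r : ℕ → ℝ} (hrpos : ∀ n, 0 < r n) (hrmono : Monotone r) {E : ℝ≥0∞}
    (hE : ∀ l z, z.1 ∈ C → ∫⁻ ω, rEval r (hitTime C ω) ∂law l z ≤ E)
    (ξ1 : Measure X) (ξ2 : Measure Θ) [IsProbabilityMeasure ξ1] [IsProbabilityMeasure ξ2]
    (K : ℝ) {M' : ℝ} (hM' : 0 < M') (t : ℕ) :
    chainLaw law ξ1 ξ2 {ω | M' ≤ W (ω (t + 1)).1}
      ≤ ξ1 {x | K ≤ W x} + ENNReal.ofReal (max K Mb) / ENNReal.ofReal M'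
        + ∑ s ∈ Finset.range t,
            min (ENNReal.ofReal Mb / ENNReal.ofReal M') (E / ENNReal.ofReal (r (s + 1))) := by
  set excursion : ℕ → Set (ℕ → X × Θ) := fun s =>
    {ω | (ω 0).1 ∈ C} ∩ avoidsUpTo C s ∩ {ω | M' ≤ W (ω (s + 1)).1}
  have hexcursion : ∀ s, MeasurableSet (excursion s) := fun s =>
    ((hC.preimage (measurable_pi_apply 0).fst).inter (measurableSet_avoidsUpTo hC s)).inter
      (measurableSet_le measurable_const (hW.comp (measurable_pi_apply _).fst))
  have hsplit : {ω | M' ≤ W (ω (t + 1)).1} ⊆ (avoidsUpTo C t ∩ {ω | M' ≤ W (ω (t + 1)).1})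
      ∪ ⋃ s ∈ Finset.range t, shift (t - s) ⁻¹' excursion s := by
    intro ω hω
    rcases mem_avoidsUpTo_or_exists_last_visit ω t with hav | ⟨s, hst, hvisit, hav⟩
    · exact .inl ⟨hav, hω⟩
    refine .inr (mem_iUnion₂.2
      ⟨s, Finset.mem_range.2 hst, ⟨by simpa [shift] using hvisit, hav⟩, ?_⟩)
    show M' ≤ W (ω (s + 1 + (t - s))).1
    rwa [show s + 1 + (t - s) = t + 1 by omega]
  calc _ ≤ chainLaw law ξ1 ξ2 (avoidsUpTo C t ∩ {ω | M' ≤ W (ω (t + 1)).1})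
        + ∑ s ∈ Finset.range t, chainLaw law ξ1 ξ2 (shift (t - s) ⁻¹' excursion s) :=
        (measure_mono hsplit).trans ((measure_union_le _ _).trans
          (add_le_add le_rfl (measure_biUnion_finset_le _ _)))
    _ ≤ _ := by
        gcongr with s
        · exact hlaw.chainLaw_avoidsUpTo_le hcompat hC hW hdrift hMb ξ1 ξ2 K hM' t
        rw [chainLaw_apply hlaw ξ1 ξ2 ((hexcursion s).preimage (measurable_shift _))]
        refine (lintegral_mono fun z => hlaw.apply_shift_preimage_le hPbar (hexcursion s) (t - s) 0
          (fun z' => hlaw.measure_excursion_le hcompat hC hW hdrift hMb hrpos hrmono hE hM' s _ z')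
          z).trans ?_
        simp

end IsAdaptiveLaw

end AdaptiveLaw

theorem bounded_in_probability_general
    {X Θ : Type*} [MeasurableSpace X] [MeasurableSpace Θ]
    (P : Θ → Kernel X X)
    (Pbar : ℕ → Kernel (X × Θ) (X × Θ)) (hPbarm : ∀ n, IsMarkovKernel (Pbar n))
    (hcompat : Compat P Pbar)
    (law : ℕ → X × Θ → Measure (ℕ → X × Θ)) (hlaw : IsAdaptiveLaw Pbar law)
    (C : Set X) (hCmeas : MeasurableSet C)
    (W : X → ℝ) (hWmeas : Measurable W)
    (r : ℕ → ℝ) (hrpos : ∀ n, 0 < r n) (hrmono : Monotone r)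
    (hdriftout : ∀ (θ : Θ), ∀ x ∉ C,
        (∫⁻ y, ENNReal.ofReal (W y) ∂(P θ x)) ≤ ENNReal.ofReal (W x))
    (hsupC : ∃ Mb : ℝ, ∀ (θ : Θ), ∀ x ∈ C,
        (∫⁻ y, ENNReal.ofReal (W y) ∂(P θ x)) ≤ ENNReal.ofReal Mb)
    (hhit : (⨆ l : ℕ, ⨆ p : {p : X × Θ // p.1 ∈ C},
        ∫⁻ ω, rEval r (hitTime C ω) ∂(law l p.1)) < ⊤)
    (hrsum : Summable fun k => 1 / r k)
    (ξ1 : Measure X) (ξ2 : Measure Θ)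
    (hξ1 : IsProbabilityMeasure ξ1) (hξ2 : IsProbabilityMeasure ξ2) :
    ∀ ε : ℝ, 0 < ε → ∃ (M : ℝ) (N : ℕ), ∀ M' : ℝ, M ≤ M' → ∀ n : ℕ, N ≤ n →
      chainLaw law ξ1 ξ2 {ω | M' ≤ W ((ω n).1)} ≤ ENNReal.ofReal ε := by
  intro ε hε
  obtain ⟨Mb, hMb⟩ := hsupC
  set E := ⨆ l : ℕ, ⨆ p : {p : X × Θ // p.1 ∈ C}, ∫⁻ ω, rEval r (hitTime C ω) ∂(law l p.1)
  have hE : ∀ l (z : X × Θ), z.1 ∈ C → ∫⁻ ω, rEval r (hitTime C ω) ∂law l z ≤ E :=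
    fun l z hz => le_iSup₂_of_le l ⟨z, hz⟩ le_rfl
  have hδ : (0 : ℝ≥0∞) < ENNReal.ofReal (ε / 3) := ENNReal.ofReal_pos.2 (by positivity)
  obtain ⟨K, hK⟩ :=
    ((tendsto_measure_setOf_le_atTop ξ1 hWmeas).eventually (gt_mem_nhds hδ)).exists
  obtain ⟨m, hm⟩ := exists_sum_range_min_le (f := fun s => E / ENNReal.ofReal (r (s + 1)))
    (ne_top_of_le_ne_top (tsum_div_ofReal_ne_top hrpos hrsum hhit.ne)
      (ENNReal.tsum_comp_le_tsum_of_injective (add_left_injective 1) _)) hδ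
  obtain ⟨M, hM⟩ := eventually_atTop.1 <| (eventually_gt_atTop 0).and <|
    (ENNReal.Tendsto.const_div (a := ENNReal.ofReal (max K Mb) + m * ENNReal.ofReal Mb)
      ENNReal.tendsto_ofReal_atTop (.inr (by finiteness))).eventually
        (gt_mem_nhds (by rwa [ENNReal.div_top]))
  refine ⟨M, 1, fun M' hM' n hn => ?_⟩
  obtain ⟨hM'pos, hM'large⟩ := hM M' hM'
  obtain ⟨t, rfl⟩ := Nat.exists_eq_add_of_le' hn
  calc _ ≤ _ := hlaw.chainLaw_exceeds_le hPbarm hcompat hCmeas hWmeas hdriftout hMb hrpos hrmono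
        hE ξ1 ξ2 K hM'pos t
    _ ≤ ENNReal.ofReal (ε / 3) + ENNReal.ofReal (max K Mb) / ENNReal.ofReal M'
        + (m * (ENNReal.ofReal Mb / ENNReal.ofReal M') + ENNReal.ofReal (ε / 3)) :=
        add_le_add (add_le_add hK.le le_rfl) (hm _ _)
    _ = ENNReal.ofReal (ε / 3) + (ENNReal.ofReal (max K Mb) + m * ENNReal.ofReal Mb)
        / ENNReal.ofReal M' + ENNReal.ofReal (ε / 3) := by
        rw [ENNReal.add_div, mul_div_assoc]; ring
    _ ≤ ENNReal.ofReal (ε / 3) + ENNReal.ofReal (ε / 3) + ENNReal.ofReal (ε / 3) := by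
        gcongr
    _ = ENNReal.ofReal ε := by
        rw [← ENNReal.ofReal_add, ← ENNReal.ofReal_add] <;> first | positivity | ring_nf

/-- Lemma 4.10: boundedness in probability of `W(X_n)`. -/
theorem bounded_in_probability
    {X Θ : Type*} [MeasurableSpace X] [MeasurableSpace Θ]
    (P : Θ → Kernel X X) (hPm : ∀ θ, IsMarkovKernel (P θ))
    (hPθmeas : ∀ (x : X) (A : Set X), MeasurableSet A → Measurable fun θ => P θ x A)
    (Pbar : ℕ → Kernel (X × Θ) (X × Θ)) (hPbarm : ∀ n, IsMarkovKernel (Pbar n))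
    (hcompat : Compat P Pbar)
    (law : ℕ → X × Θ → Measure (ℕ → X × Θ)) (hlaw : IsAdaptiveLaw Pbar law)
    (C : Set X) (hCmeas : MeasurableSet C)
    (W : X → ℝ) (hWmeas : Measurable W) (hWpos : ∀ x, 0 < W x)
    (r : ℕ → ℝ) (hrpos : ∀ n, 0 < r n) (hrmono : Monotone r)
    (hdriftout : ∀ (θ : Θ), ∀ x ∉ C,
        (∫⁻ y, ENNReal.ofReal (W y) ∂(P θ x)) ≤ ENNReal.ofReal (W x))
    (hsupC : ∃ Mb : ℝ, ∀ (θ : Θ), ∀ x ∈ C,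
        (∫⁻ y, ENNReal.ofReal (W y) ∂(P θ x)) ≤ ENNReal.ofReal Mb)
    (hhit : (⨆ l : ℕ, ⨆ p : {p : X × Θ // p.1 ∈ C},
        ∫⁻ ω, rEval r (hitTime C ω) ∂(law l p.1)) < ⊤)
    (hrsum : Summable fun k => 1 / r k)
    (ξ1 : Measure X) (ξ2 : Measure Θ)
    (hξ1 : IsProbabilityMeasure ξ1) (hξ2 : IsProbabilityMeasure ξ2) :
    ∀ ε : ℝ, 0 < ε → ∃ (M : ℝ) (N : ℕ), ∀ M' : ℝ, M ≤ M' → ∀ n : ℕ, N ≤ n →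
      chainLaw law ξ1 ξ2 {ω | M' ≤ W ((ω n).1)} ≤ ENNReal.ofReal ε :=
  bounded_in_probability_general P Pbar hPbarm hcompat law hlaw C hCmeas W hWmeas r hrpos hrmono
    hdriftout hsupC hhit hrsum ξ1 ξ2 hξ1 hξ2

end AdaptiveMCMC
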